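/- Define operators on the vector space with basis {|k,l,m⟩ : k,l,m ∈ ℤ₊} by the rules: b₁⁺|k,l,m⟩ = |k+1,l,m⟩; b₂⁺|2k,l,m⟩ = |2k,l+1,m⟩; b₂⁺|2k+1,l,m⟩ = |2k,l,m+1⟩ − |2k+1,l+1,m⟩; b₁⁻|2k,l,m⟩ = 2k|2k−1,l,m⟩ + 2m|2k,l+1,m−1⟩; b₁⁻|2k+1,l,m⟩ = (p+2m+2k)|2k,l,m⟩ − 2m|2k+1,l+1,m−1⟩ (with vectors having a negative index interpreted as 0). Then [{b₁⁻, b₁⁺}, b₁⁺] = 2b₁⁺ holds on every basis vector. -/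
import Mathlib


/-- `b₁⁺|k,l,m⟩ = |k+1,l,m⟩`. -/
noncomputable def b1p : ((ℕ × ℕ × ℕ) →₀ ℂ) →ₗ[ℂ] ((ℕ × ℕ × ℕ) →₀ ℂ) :=
  Finsupp.lift _ ℂ (ℕ × ℕ × ℕ) fun t => Finsupp.single (t.1 + 1, t.2.1, t.2.2) 1

/-- `b₂⁺|2k,l,m⟩ = |2k,l+1,m⟩`, `b₂⁺|2k+1,l,m⟩ = |2k,l,m+1⟩ − |2k+1,l+1,m⟩`. -/
noncomputable def b2p : ((ℕ × ℕ × ℕ) →₀ ℂ) →ₗ[ℂ] ((ℕ × ℕ × ℕ) →₀ ℂ) :=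
  Finsupp.lift _ ℂ (ℕ × ℕ × ℕ) fun t =>
    if Even t.1 then Finsupp.single (t.1, t.2.1 + 1, t.2.2) 1
    else Finsupp.single (t.1 - 1, t.2.1, t.2.2 + 1) 1 -
      Finsupp.single (t.1, t.2.1 + 1, t.2.2) 1

/-- `b₁⁻|2k,l,m⟩ = 2k|2k−1,l,m⟩ + 2m|2k,l+1,m−1⟩`,
`b₁⁻|2k+1,l,m⟩ = (p+2m+2k)|2k,l,m⟩ − 2m|2k+1,l+1,m−1⟩`
(vectors with a negative index are zero; here such terms carry zero coefficients). -/
noncomputable def b1m (p : ℝ) : ((ℕ × ℕ × ℕ) →₀ ℂ) →ₗ[ℂ] ((ℕ × ℕ × ℕ) →₀ ℂ) :=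
  Finsupp.lift _ ℂ (ℕ × ℕ × ℕ) fun t =>
    if Even t.1 then
      (t.1 : ℂ) • Finsupp.single (t.1 - 1, t.2.1, t.2.2) 1 +
        (2 * t.2.2 : ℂ) • Finsupp.single (t.1, t.2.1 + 1, t.2.2 - 1) 1
    else
      ((p : ℂ) + 2 * t.2.2 + ((t.1 - 1 : ℕ) : ℂ)) • Finsupp.single (t.1 - 1, t.2.1, t.2.2) 1 -
        (2 * t.2.2 : ℂ) • Finsupp.single (t.1, t.2.1 + 1, t.2.2 - 1) 1


lemma b1p_single (t : ℕ × ℕ × ℕ) :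
    b1p (Finsupp.single t 1) = Finsupp.single (t.1 + 1, t.2.1, t.2.2) 1 := by
  rw [b1p, Finsupp.lift_apply, Finsupp.sum_single_index (by simp), one_smul]

lemma b1m_single (p : ℝ) (t : ℕ × ℕ × ℕ) :
    b1m p (Finsupp.single t 1) =
      if Even t.1 then
        (t.1 : ℂ) • Finsupp.single (t.1 - 1, t.2.1, t.2.2) 1 +
          (2 * t.2.2 : ℂ) • Finsupp.single (t.1, t.2.1 + 1, t.2.2 - 1) 1
      else
        ((p : ℂ) + 2 * t.2.2 + ((t.1 - 1 : ℕ) : ℂ)) • Finsupp.single (t.1 - 1, t.2.1, t.2.2) 1 -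
          (2 * t.2.2 : ℂ) • Finsupp.single (t.1, t.2.1 + 1, t.2.2 - 1) 1 := by
  rw [b1m, Finsupp.lift_apply, Finsupp.sum_single_index (by simp), one_smul]

/-- The relation `[{b₁⁻, b₁⁺}, b₁⁺] = 2 b₁⁺` holds on every basis vector `|k,l,m⟩`. -/
theorem triple_relation_b1 (p : ℝ) (k l m : ℕ) :
    (let N := b1m p ∘ₗ b1p + b1p ∘ₗ b1m p
     N (b1p (Finsupp.single (k, l, m) 1)) - b1p (N (Finsupp.single (k, l, m) 1)) =
       (2 : ℂ) • b1p (Finsupp.single (k, l, m) 1)) := by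
  obtain ⟨n, rfl | rfl⟩ := Nat.even_or_odd' k <;>
    simp only [LinearMap.add_apply, LinearMap.comp_apply, b1p_single, b1m_single, map_add,
      map_sub, map_smul, Nat.even_add_one, Nat.add_sub_cancel, Nat.not_even_iff_odd,
      show ¬ Odd (2*n) by simp [Nat.even_mul], show Even (2*n) from even_two_mul n,
      if_true, if_false, not_false_eq_true, not_true, ite_true, ite_false,
      b1p_single]
  · rcases n with _ | n
    · norm_num
    · simp only [show 2 * (n + 1) = 2 * n + 1 + 1 from by ring, Nat.add_sub_cancel]
      push_cast
      module
  · push_cast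
    module
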